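/- arXiv:2403.05677 — 10 statements merged into one kernel-verified Lean document; each statement's English description precedes it below -/
import Mathlib

section
/- For all integers r ≥ 2, n ≥ 1, and every integer N with N > ((3r - 5 + sqrt(r^2 - 2r + 9))/2)·n, every r-coloring of the edges of the complete bipartite graph K_{N,N} contains a monochromatic copy of the double star S_{n,n}. (Equivalently, R^bip_r(S_{n,n}) ≤ ((3r-5+sqrt(r^2-2r+9))/2)n + 1.) -/
/-!
Call a colour big at a vertex if more than `n` edges of that colour meet it. Without a
monochromatic `S_{n,n}` no edge has a colour that is big at both of its ends. A vertex with
`k` big colours is the small end of at most `(r - k) n` edges, and once `N > r n` every vertex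
has a big colour. Let `A_i`, `B_i` count the vertices of `X`, `Y` whose only big colour is `i`;
an edge between two such vertices is small at both ends. Counting small ends gives
`N² + ∑ A_i B_i + 4nN ≤ 2rnN + n ∑ (A_i + B_i)`, while a vertex whose only big colour is `i`
has at least `N - (r - 1) n` edges of colour `i`, all going to vertices where `i` is small, so
`A_i (N - (r - 1) n) ≤ n (N - B_i)` and symmetrically. Eliminating `A_i`, `B_i` leaves
`(N - (r - 1) n) (N - (2r - 4) n) ≤ r n²`, which fails beyond the larger root of this quadratic.
-/

/-- A monochromatic copy of the double star `S_{k,l}` in an `r`-coloring `c` of the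
edges of the complete bipartite graph `K_{N,N}` with parts `X = Fin N` (first argument
of `c`) and `Y = Fin N` (second argument): centers `u ∈ X`, `v ∈ Y`, leaves `a i ∈ Y`
of `u` and `b j ∈ X` of `v`, with all edges of a common color. -/
def BipHasMonoDoubleStar (N r k l : ℕ) (c : Fin N → Fin N → Fin r) : Prop :=
  ∃ (u v : Fin N) (a : Fin k → Fin N) (b : Fin l → Fin N) (col : Fin r),
    Function.Injective a ∧ Function.Injective b ∧
    (∀ i, a i ≠ v) ∧ (∀ j, b j ≠ u) ∧
    c u v = col ∧ (∀ i, c u (a i) = col) ∧ (∀ j, c (b j) v = col)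

open Finset Function

section Counting

variable {α β κ : Type*} [Fintype β] [Fintype κ] [DecidableEq κ]

def colorDeg (c : α → β → κ) (x : α) (j : κ) : ℕ := #{y | c x y = j}

def bigColors (n : ℕ) (c : α → β → κ) (x : α) : Finset κ := {j | n < colorDeg c x j}

variable {n : ℕ} {c : α → β → κ}

lemma sum_colorDeg (c : α → β → κ) (x : α) : ∑ j, colorDeg c x j = Fintype.card β := by
  simpa [colorDeg] using sum_card_fiberwise_eq_card_filter univ univ (c x)

lemma mem_bigColors {x : α} {j : κ} : j ∈ bigColors n c x ↔ n < colorDeg c x j := by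
  simp [bigColors]

lemma bigColors_nonempty (h : Fintype.card κ * n < Fintype.card β) (x : α) :
    (bigColors n c x).Nonempty := by
  by_contra hempty
  have hsmall : ∀ j ∈ univ, colorDeg c x j ≤ n := fun j _ =>
    not_lt.1 fun hj => hempty ⟨j, mem_bigColors.2 hj⟩
  have := sum_le_card_nsmul _ _ _ hsmall
  rw [sum_colorDeg, card_univ, smul_eq_mul] at this
  omega

lemma two_le_card_bigColors_add (h : Fintype.card κ * n < Fintype.card β) (x : α) :
    2 ≤ #(bigColors n c x) + #{i | bigColors n c x = {i}} := by
  obtain ⟨i, hi⟩ | hnt := (bigColors_nonempty h x).exists_eq_singleton_or_nontrivial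
  · rw [hi, card_singleton]
    have : 0 < #{j | ({i} : Finset κ) = {j}} := card_pos.2 ⟨i, by simp⟩
    omega
  · have := one_lt_card_iff_nontrivial.2 hnt
    omega

lemma card_filter_notMem_bigColors_add_le (n : ℕ) (c : α → β → κ) (x : α) :
    #{y | c x y ∉ bigColors n c x} + n * #(bigColors n c x) ≤ Fintype.card κ * n := by
  set B := bigColors n c x
  have hcompl : #{y | c x y ∉ B} = ∑ j ∈ Bᶜ, colorDeg c x j := by
    simp_rw [colorDeg, sum_card_fiberwise_eq_card_filter, mem_compl]
  have hle : ∑ j ∈ Bᶜ, colorDeg c x j ≤ #Bᶜ * n :=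
    sum_le_card_nsmul _ _ _ fun j hj => not_lt.1 fun hj' => mem_compl.1 hj (mem_bigColors.2 hj')
  calc #{y | c x y ∉ B} + n * #B ≤ (#Bᶜ + #B) * n := by rw [hcompl]; linarith
    _ = Fintype.card κ * n := by rw [card_compl_add_card]

lemma card_add_le_colorDeg_add {x : α} {i : κ} (hx : bigColors n c x = {i}) :
    Fintype.card β + n ≤ colorDeg c x i + Fintype.card κ * n := by
  have hle : ∀ j ∈ univ.erase i, colorDeg c x j ≤ n := fun j hj => by
    have : j ∉ bigColors n c x := by simpa [hx] using ne_of_mem_erase hj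
    simpa [mem_bigColors] using this
  have hsum := sum_le_card_nsmul _ _ _ hle
  rw [smul_eq_mul] at hsum
  have hcard := card_erase_add_one (mem_univ i)
  rw [card_univ] at hcard
  rw [← sum_colorDeg c x, ← add_sum_erase _ _ (mem_univ i), ← hcard]
  nlinarith

variable [Fintype α]

lemma card_filter_prod_eq_sum (p : α → β → Prop) [∀ x y, Decidable (p x y)] :
    #{q : α × β | p q.1 q.2} = ∑ x, #{y | p x y} := by
  simp only [card_filter, Fintype.sum_prod_type]

lemma card_filter_prod_eq_sum_right (p : α → β → Prop) [∀ x y, Decidable (p x y)] :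
    #{q : α × β | p q.1 q.2} = ∑ y, #{x | p x y} := by
  simp only [card_filter, Fintype.sum_prod_type_right]

def soleBigCount (n : ℕ) (c : α → β → κ) (i : κ) : ℕ := #{x | bigColors n c x = {i}}

lemma sum_colorDeg_add_mul_card_le
    (hc : ∀ x y, c x y ∉ bigColors n c x ∨ c x y ∉ bigColors n (swap c) y) (i : κ) :
    ∑ x ∈ {x | i ∈ bigColors n c x}, colorDeg c x i + n * #{y | i ∈ bigColors n (swap c) y}
      ≤ n * Fintype.card β := by
  set S : Finset α := {x | i ∈ bigColors n c x}
  have hcount : ∑ x ∈ S, colorDeg c x i = ∑ y, #{x ∈ S | c x y = i} :=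
    sum_card_bipartiteAbove_eq_sum_card_bipartiteBelow (fun x y => c x y = i)
  have hy : ∀ y ∈ univ,
      #{x ∈ S | c x y = i} + (if i ∈ bigColors n (swap c) y then n else 0) ≤ n := by
    intro y _
    split_ifs with hiy
    · have : {x ∈ S | c x y = i} = ∅ := filter_eq_empty_iff.2 fun x hx hxy => by
        rcases hc x y with h | h
        · exact h (hxy ▸ (mem_filter.1 hx).2)
        · exact h (hxy ▸ hiy)
      simp [this]
    · have : #{x ∈ S | c x y = i} ≤ colorDeg (swap c) y i :=
        card_le_card fun x hx => mem_filter.2 ⟨mem_univ _, (mem_filter.1 hx).2⟩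
      simp only [mem_bigColors, not_lt] at hiy
      omega
  have := sum_le_sum hy
  rw [sum_add_distrib, ← sum_filter, sum_const, sum_const, card_univ] at this
  simp only [smul_eq_mul] at this
  rw [hcount]
  linarith

lemma soleBigCount_mul_add_le
    (hc : ∀ x y, c x y ∉ bigColors n c x ∨ c x y ∉ bigColors n (swap c) y) (i : κ) :
    soleBigCount n c i * (Fintype.card β + n) + n * soleBigCount n (swap c) i
      ≤ n * Fintype.card β + soleBigCount n c i * (Fintype.card κ * n) := by
  set A : Finset α := {x | bigColors n c x = {i}}
  have hAS : A ⊆ ({x | i ∈ bigColors n c x} : Finset α) := fun x hx => by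
    simp [(mem_filter.1 hx).2]
  have hdeg :
      #A * (Fintype.card β + n) ≤ ∑ x ∈ A, colorDeg c x i + #A * (Fintype.card κ * n) := by
    rw [← smul_eq_mul, ← sum_const, ← smul_eq_mul, ← sum_const, ← sum_add_distrib]
    exact sum_le_sum fun x hx => card_add_le_colorDeg_add (mem_filter.1 hx).2
  have hsub : ∑ x ∈ A, colorDeg c x i ≤ ∑ x ∈ {x | i ∈ bigColors n c x}, colorDeg c x i :=
    sum_le_sum_of_subset hAS
  have hB : soleBigCount n (swap c) i ≤ #{y | i ∈ bigColors n (swap c) y} :=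
    card_le_card fun y hy => by simp [(mem_filter.1 hy).2]
  have := sum_colorDeg_add_mul_card_le hc i
  have := Nat.mul_le_mul_left n hB
  change #A * _ + _ ≤ _ + #A * _
  linarith

lemma two_mul_card_le_sum_card_bigColors_add (h : Fintype.card κ * n < Fintype.card β) :
    2 * Fintype.card α ≤ ∑ x, #(bigColors n c x) + ∑ i, soleBigCount n c i := by
  have := sum_le_sum fun x (_ : x ∈ univ) => two_le_card_bigColors_add (c := c) h x
  have hsole : ∑ x, #{i | bigColors n c x = {i}} = ∑ i, soleBigCount n c i :=
    sum_card_bipartiteAbove_eq_sum_card_bipartiteBelow _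
  rw [sum_add_distrib, hsole] at this
  simpa [mul_comm] using this

lemma card_filter_notMem_bigColors_add_sum_le :
    ∑ x, #{y | c x y ∉ bigColors n c x} + n * ∑ x, #(bigColors n c x)
      ≤ Fintype.card α * (Fintype.card κ * n) := by
  have := sum_le_sum fun x (_ : x ∈ univ) => card_filter_notMem_bigColors_add_le n c x
  simpa [sum_add_distrib, mul_sum] using this

lemma card_mul_card_add_sum_mul_le
    (hc : ∀ x y, c x y ∉ bigColors n c x ∨ c x y ∉ bigColors n (swap c) y) :
    Fintype.card α * Fintype.card β + ∑ i, soleBigCount n c i * soleBigCount n (swap c) i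
      ≤ ∑ x, #{y | c x y ∉ bigColors n c x} + ∑ y, #{x | c x y ∉ bigColors n (swap c) y} := by
  classical
  set Sα : Finset (α × β) := {p | c p.1 p.2 ∉ bigColors n c p.1}
  set Sβ : Finset (α × β) := {p | c p.1 p.2 ∉ bigColors n (swap c) p.2}
  set T : κ → Finset (α × β) := fun i =>
    ({x | bigColors n c x = {i}} : Finset α) ×ˢ ({y | bigColors n (swap c) y = {i}} : Finset β)
  have hunion : Sα ∪ Sβ = univ := eq_univ_of_forall fun p => by
    simpa [Sα, Sβ] using hc p.1 p.2
  have hdisj : ((univ : Finset κ) : Set κ).PairwiseDisjoint T := fun i _ j _ hij =>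
    disjoint_left.2 fun p hi hj => hij <| singleton_injective <|
      (mem_filter.1 (mem_product.1 hi).1).2.symm.trans (mem_filter.1 (mem_product.1 hj).1).2
  have hsole : univ.biUnion T ⊆ Sα ∩ Sβ := fun p hp => by
    obtain ⟨i, -, hp⟩ := mem_biUnion.1 hp
    simp only [T, mem_product, mem_filter, mem_univ, true_and] at hp
    have hne : c p.1 p.2 ≠ i := fun h => by
      rcases hc p.1 p.2 with h' | h'
      · exact h' (by rw [hp.1, h]; exact mem_singleton_self i)
      · exact h' (by rw [hp.2, h]; exact mem_singleton_self i)
    simp [Sα, Sβ, hp.1, hp.2, hne]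
  have hcard : #(univ.biUnion T) = ∑ i, soleBigCount n c i * soleBigCount n (swap c) i := by
    rw [card_biUnion hdisj]
    simp [T, card_product, soleBigCount]
  rw [← card_filter_prod_eq_sum, ← card_filter_prod_eq_sum_right, ← card_union_add_card_inter,
    hunion, card_univ, Fintype.card_prod, ← hcard]
  exact Nat.add_le_add_left (card_le_card hsole) _

lemma card_mul_card_add_le
    (hc : ∀ x y, c x y ∉ bigColors n c x ∨ c x y ∉ bigColors n (swap c) y)
    (hα : Fintype.card κ * n < Fintype.card α) (hβ : Fintype.card κ * n < Fintype.card β) :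
    Fintype.card α * Fintype.card β + ∑ i, soleBigCount n c i * soleBigCount n (swap c) i
        + 2 * n * (Fintype.card α + Fintype.card β)
      ≤ Fintype.card κ * n * (Fintype.card α + Fintype.card β)
        + n * ∑ i, (soleBigCount n c i + soleBigCount n (swap c) i) := by
  have hpairs := card_mul_card_add_sum_mul_le hc
  have hsmallα := card_filter_notMem_bigColors_add_sum_le (n := n) (c := c)
  have hsmallβ := card_filter_notMem_bigColors_add_sum_le (n := n) (c := swap c)
  have hbigα := Nat.mul_le_mul_left n (two_mul_card_le_sum_card_bigColors_add (c := c) hβ)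
  have hbigβ := Nat.mul_le_mul_left n (two_mul_card_le_sum_card_bigColors_add (c := swap c) hα)
  rw [sum_add_distrib]
  nlinarith

end Counting

lemma mul_add_mul_le_of_mul_le_mul_sub {m x P a b : ℝ} (hm : 0 ≤ m) (ha : 0 ≤ a) (hb : 0 ≤ b)
    (hP : 0 ≤ P) (hPx : P ≤ x) (hab : a * P ≤ m * (x - b)) (hba : b * P ≤ m * (x - a)) :
    m * (a + b) * P ≤ m ^ 2 * x + a * b * P := by
  -- the gap is `(a - m) (b - m) P + m² (x - P)`; `hab`, `hba` cover the mixed-sign cases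
  rcases le_total m a with hma | ham <;> rcases le_total m b with hmb | hbm
  · nlinarith [mul_nonneg (mul_nonneg (sub_nonneg.2 hma) (sub_nonneg.2 hmb)) hP,
      mul_nonneg (mul_nonneg hm hm) (sub_nonneg.2 hPx)]
  · nlinarith [mul_le_mul_of_nonneg_left hab (sub_nonneg.2 hbm),
      mul_nonneg (mul_nonneg hm hb) (add_nonneg (sub_nonneg.2 hbm) (sub_nonneg.2 hPx))]
  · nlinarith [mul_le_mul_of_nonneg_left hba (sub_nonneg.2 ham),
      mul_nonneg (mul_nonneg hm ha) (add_nonneg (sub_nonneg.2 ham) (sub_nonneg.2 hPx))]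
  · nlinarith [mul_nonneg (mul_nonneg (sub_nonneg.2 ham) (sub_nonneg.2 hbm)) hP,
      mul_nonneg (mul_nonneg hm hm) (sub_nonneg.2 hPx)]

lemma sub_mul_sub_le_of_counts {ι : Type*} [Fintype ι] {m x : ℝ} {a b : ι → ℝ}
    (hm : 0 ≤ m) (hx : 0 < x) (ha : ∀ i, 0 ≤ a i) (hb : ∀ i, 0 ≤ b i)
    (hP : (Fintype.card ι - 1) * m ≤ x)
    (hab : ∀ i, a i * (x + m) + m * b i ≤ m * x + a i * (Fintype.card ι * m))
    (hba : ∀ i, b i * (x + m) + m * a i ≤ m * x + b i * (Fintype.card ι * m))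
    (hglob : x * x + ∑ i, a i * b i + 2 * m * (x + x)
      ≤ Fintype.card ι * m * (x + x) + m * ∑ i, (a i + b i)) :
    (x - (Fintype.card ι - 1) * m) * (x - (2 * Fintype.card ι - 4) * m)
      ≤ Fintype.card ι * m ^ 2 := by
  set r : ℝ := ↑(Fintype.card ι)
  set P := x - (r - 1) * m
  have hcolor : ∀ i ∈ univ, m * (a i + b i) * P ≤ m ^ 2 * x + a i * b i * P := fun i _ => by
    have hr : (1 : ℝ) ≤ r := Nat.one_le_cast.2 (Fintype.card_pos_iff.2 ⟨i⟩)
    exact mul_add_mul_le_of_mul_le_mul_sub hm (ha i) (hb i) (by linarith)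
      (by nlinarith [mul_nonneg (sub_nonneg.2 hr) hm]) (by linarith [hab i]) (by linarith [hba i])
  have hsum : m * (∑ i, (a i + b i)) * P ≤ r * (m ^ 2 * x) + (∑ i, a i * b i) * P := by
    have := sum_le_sum hcolor
    rwa [sum_add_distrib, sum_const, card_univ, nsmul_eq_mul, ← sum_mul, ← sum_mul, ← mul_sum]
      at this
  have hcubic : x * ((x - (2 * r - 4) * m) * P) ≤ x * (r * m ^ 2) := by
    nlinarith [mul_le_mul_of_nonneg_right hglob (show 0 ≤ P by linarith)]
  have := le_of_mul_le_mul_left hcubic hx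
  linarith

lemma le_doubleStar_coeff {r : ℝ} (hr : 2 ≤ r) : r ≤ (3 * r - 5 + √(r ^ 2 - 2 * r + 9)) / 2 := by
  have : 3 ≤ √(r ^ 2 - 2 * r + 9) := Real.le_sqrt_of_sq_le (by nlinarith)
  linarith

lemma lt_sub_mul_sub_of_doubleStar_coeff_lt {r m x : ℝ} (hm : 0 ≤ m)
    (hx : (3 * r - 5 + √(r ^ 2 - 2 * r + 9)) / 2 * m < x) :
    r * m ^ 2 < (x - (r - 1) * m) * (x - (2 * r - 4) * m) := by
  set s := √(r ^ 2 - 2 * r + 9)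
  have hs : s ^ 2 = r ^ 2 - 2 * r + 9 := Real.sq_sqrt (by nlinarith [sq_nonneg (r - 1)])
  have hlt : s * m < 2 * x - (3 * r - 5) * m := by linarith
  have hsq := mul_self_lt_mul_self (mul_nonneg (Real.sqrt_nonneg _) hm) hlt
  -- `4 ((x - (r-1)m)(x - (2r-4)m) - r m²) = (2x - (3r-5)m)² - (r² - 2r + 9) m²`
  nlinarith

lemma exists_injective_fin_mem {α : Type*} [LinearOrder α] {s : Finset α} {n : ℕ}
    (h : n ≤ #s) : ∃ a : Fin n → α, Injective a ∧ ∀ i, a i ∈ s := by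
  obtain ⟨t, hts, rfl⟩ := exists_subset_card_eq h
  exact ⟨t.orderEmbOfFin rfl, (t.orderEmbOfFin rfl).injective,
    fun i => hts (t.orderEmbOfFin_mem rfl i)⟩

lemma bipHasMonoDoubleStar_of_mem_bigColors {N r n : ℕ} {c : Fin N → Fin N → Fin r}
    {x y : Fin N} (hx : c x y ∈ bigColors n c x) (hy : c x y ∈ bigColors n (swap c) y) :
    BipHasMonoDoubleStar N r n n c := by
  rw [mem_bigColors, colorDeg] at hx hy
  have hA : n ≤ #(({y' | c x y' = c x y} : Finset (Fin N)).erase y) := by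
    rw [card_erase_of_mem (by simp)]; omega
  have hB : n ≤ #(({x' | c x' y = c x y} : Finset (Fin N)).erase x) := by
    rw [card_erase_of_mem (by simp)]; exact Nat.le_sub_one_of_lt hy
  obtain ⟨a, ha, hamem⟩ := exists_injective_fin_mem hA
  obtain ⟨b, hb, hbmem⟩ := exists_injective_fin_mem hB
  refine ⟨x, y, a, b, c x y, ha, hb, fun i => ne_of_mem_erase (hamem i),
    fun j => ne_of_mem_erase (hbmem j), rfl, fun i => ?_, fun j => ?_⟩
  · simpa using mem_of_mem_erase (hamem i)
  · simpa using mem_of_mem_erase (hbmem j)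

theorem stmt1_general (r n N : ℕ) (hr : 2 ≤ r)
    (hN : ((3*(r:ℝ) - 5 + Real.sqrt ((r:ℝ)^2 - 2*r + 9))/2) * n < (N : ℝ))
    (c : Fin N → Fin N → Fin r) :
    BipHasMonoDoubleStar N r n n c := by
  by_contra hno
  have hc : ∀ x y, c x y ∉ bigColors n c x ∨ c x y ∉ bigColors n (swap c) y := fun x y => by
    by_contra! h
    exact hno (bipHasMonoDoubleStar_of_mem_bigColors h.1 h.2)
  have hrn : (r : ℝ) * n < N := (mul_le_mul_of_nonneg_right
    (le_doubleStar_coeff (by exact_mod_cast hr)) n.cast_nonneg).trans_lt hN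
  have hrn' : Fintype.card (Fin r) * n < Fintype.card (Fin N) := by
    simpa using (by exact_mod_cast hrn : r * n < N)
  have hcolor := soleBigCount_mul_add_le hc
  have hcolor' := soleBigCount_mul_add_le (c := swap c) fun y x => (hc x y).symm
  have hglob := card_mul_card_add_le hc hrn' hrn'
  simp only [Fintype.card_fin] at hcolor hcolor' hglob
  have hquad := sub_mul_sub_le_of_counts (ι := Fin r) (m := n) (x := N)
    (a := fun i => (soleBigCount n c i : ℝ)) (b := fun i => (soleBigCount n (swap c) i : ℝ))
    n.cast_nonneg ((by positivity : (0 : ℝ) ≤ r * n).trans_lt hrn)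
    (fun _ => Nat.cast_nonneg _) (fun _ => Nat.cast_nonneg _)
    (by rw [Fintype.card_fin]; nlinarith [n.cast_nonneg (α := ℝ)])
    (fun i => by rw [Fintype.card_fin]; exact_mod_cast hcolor i)
    (fun i => by rw [Fintype.card_fin]; exact_mod_cast hcolor' i)
    (by rw [Fintype.card_fin]; exact_mod_cast hglob)
  simp only [Fintype.card_fin] at hquad
  exact (lt_sub_mul_sub_of_doubleStar_coeff_lt n.cast_nonneg hN).not_ge hquad

/-- `R^bip_r(S_{n,n}) ≤ ((3r-5+√(r²-2r+9))/2)·n + 1`. -/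
theorem stmt1 (r n N : ℕ) (hr : 2 ≤ r) (hn : 1 ≤ n)
    (hN : ((3*(r:ℝ) - 5 + Real.sqrt ((r:ℝ)^2 - 2*r + 9))/2) * n < (N : ℝ))
    (c : Fin N → Fin N → Fin r) :
    BipHasMonoDoubleStar N r n n c :=
  stmt1_general r n N hr hN c
end

section
/- For all integers r ≥ 3 and n ≥ 1, there exists an r-coloring of the edges of the complete graph on 2(r-1)n vertices that contains no monochromatic copy of the double star S_{n,n}. (Equivalently, R_r(S_{n,n}) ≥ (r-1)2n + 1.) -/
/-!
Split the `2(r-1)n` vertices into `r-1` blocks of size `2n`, each cut into two halves of size `n`.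
Edges inside a block get the last colour; an edge between blocks `i < j` gets colour `i` if its
endpoints lie in halves on the same side and colour `j` otherwise. The components of the last
colour are the blocks, too small for the `2n+2` vertices of `S_{n,n}`. An edge of colour `i < r-1`
has an endpoint outside block `i`, and all neighbours of that endpoint in colour `i` lie in a single
half of block `i`; so it has at most `n` of them, whereas a centre of `S_{n,n}` has `n+1`.
-/

/-- A monochromatic copy of the double star `S_{k,l}` in an `r`-coloring `c` of the
edges of the complete graph on `Fin N`. -/
def HasMonoDoubleStar (N r k l : ℕ) (c : Fin N → Fin N → Fin r) : Prop :=
  ∃ (u v : Fin N) (a : Fin k → Fin N) (b : Fin l → Fin N) (col : Fin r),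
    u ≠ v ∧ Function.Injective a ∧ Function.Injective b ∧
    (∀ i, a i ≠ u ∧ a i ≠ v) ∧ (∀ j, b j ≠ u ∧ b j ≠ v) ∧
    (∀ i j, a i ≠ b j) ∧
    c u v = col ∧ (∀ i, c u (a i) = col) ∧ (∀ j, c v (b j) = col)

open Finset

theorem HasMonoDoubleStar.exists_disjoint_nbhds {N r k l : ℕ} {c : Fin N → Fin N → Fin r}
    (hc : ∀ u v, c u v = c v u) (h : HasMonoDoubleStar N r k l c) :
    ∃ u v col, c u v = col ∧ ∃ A B : Finset (Fin N), Disjoint A B ∧ #A = k + 1 ∧ #B = l + 1 ∧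
      (∀ x ∈ A, c u x = col) ∧ ∀ x ∈ B, c v x = col := by
  obtain ⟨u, v, a, b, col, huv, ha, hb, hau, hbv, hab, hcuv, hca, hcb⟩ := h
  have hvA : v ∉ univ.image a := by simpa using fun i => (hau i).2
  have huB : u ∉ univ.image b := by simpa using fun j => (hbv j).1
  refine ⟨u, v, col, hcuv, insert v (univ.image a), insert u (univ.image b), ?_, ?_, ?_, ?_, ?_⟩
  · rw [disjoint_left]
    intro x hxA hxB
    simp only [mem_insert, mem_image, mem_univ, true_and] at hxA hxB
    rcases hxA with rfl | ⟨i, rfl⟩ <;> rcases hxB with rfl | ⟨j, hj⟩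
    · exact huv rfl
    · exact (hbv j).2 hj
    · exact (hau i).1 rfl
    · exact hab i j hj.symm
  · rw [card_insert_of_notMem hvA, card_image_of_injective _ ha, card_fin]
  · rw [card_insert_of_notMem huB, card_image_of_injective _ hb, card_fin]
  · simpa [hcuv] using hca
  · simpa [hc v u, hcuv] using hcb

/-- Colour of an edge between vertices labelled `(block, side)`. -/
def blockColor (m : ℕ) (p q : Fin m × Bool) : Fin (m + 1) :=
  if p.1 = q.1 then Fin.last m
  else if p.2 = q.2 then (min p.1 q.1).castSucc
  else (max p.1 q.1).castSucc

namespace blockColor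

variable {m : ℕ}

theorem comm (p q : Fin m × Bool) : blockColor m p q = blockColor m q p := by
  unfold blockColor
  simp only [eq_comm, min_comm, max_comm]

theorem eq_last_iff {p q : Fin m × Bool} : blockColor m p q = Fin.last m ↔ p.1 = q.1 := by
  unfold blockColor
  split_ifs <;> simp_all [Fin.castSucc_ne_last]

theorem eq_castSucc_of_ne {p q : Fin m × Bool} (h : p.1 ≠ q.1) :
    blockColor m p q = p.1.castSucc ∨ blockColor m p q = q.1.castSucc := by
  unfold blockColor
  rw [if_neg h]
  split_ifs
  · rcases min_choice p.1 q.1 with h | h <;> simp [h]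
  · rcases max_choice p.1 q.1 with h | h <;> simp [h]

theorem eq_castSucc_iff {p q : Fin m × Bool} {k : Fin m} (hp : p.1 ≠ k) :
    blockColor m p q = k.castSucc ↔ q = (k, if k < p.1 then p.2 else !p.2) := by
  obtain ⟨i, s⟩ := p
  obtain ⟨j, t⟩ := q
  unfold blockColor
  split_ifs <;> cases s <;> cases t <;> grind [Fin.castSucc_ne_last, Fin.castSucc_inj]

end blockColor

section Labelling

variable {N m n : ℕ} {π : Fin N → Fin m × Bool}

theorem card_block_le (hπ : ∀ p, #{x | π x = p} ≤ n) (i : Fin m) :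
    #{x | (π x).1 = i} ≤ 2 * n :=
  calc #{x | (π x).1 = i}
      ≤ #(({x | π x = (i, false)} : Finset _) ∪ ({x | π x = (i, true)} : Finset _)) :=
        card_le_card fun x hx => by
          rw [mem_filter_univ] at hx
          rw [mem_union, mem_filter_univ, mem_filter_univ, ← hx]
          cases h : (π x).2 <;> simp [Prod.ext_iff, h]
    _ ≤ n + n := (card_union_le _ _).trans (add_le_add (hπ _) (hπ _))
    _ = 2 * n := (two_mul n).symm

theorem card_le_of_forall_blockColor_eq_castSucc (hπ : ∀ p, #{x | π x = p} ≤ n) {w : Fin N}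
    {k : Fin m} (hw : (π w).1 ≠ k) {A : Finset (Fin N)}
    (hA : ∀ x ∈ A, blockColor m (π w) (π x) = k.castSucc) : #A ≤ n :=
  (card_le_card fun x hx => by
    simpa [blockColor.eq_castSucc_iff hw] using hA x hx).trans (hπ _)

theorem not_hasMonoDoubleStar_blockColor (hπ : ∀ p, #{x | π x = p} ≤ n) :
    ¬ HasMonoDoubleStar N (m + 1) n n (fun x y => blockColor m (π x) (π y)) := by
  intro h
  obtain ⟨u, v, col, huv, A, B, hAB, hA, hB, hAu, hBv⟩ :=
    h.exists_disjoint_nbhds fun x y => blockColor.comm (π x) (π y)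
  by_cases hblk : (π u).1 = (π v).1
  · have hcol : col = Fin.last m := huv ▸ blockColor.eq_last_iff.2 hblk
    have hsub : A ∪ B ⊆ ({x | (π x).1 = (π u).1} : Finset _) := by
      intro x hx
      rw [mem_filter_univ]
      rcases mem_union.1 hx with hx | hx
      · exact (blockColor.eq_last_iff.1 ((hAu x hx).trans hcol)).symm
      · exact (blockColor.eq_last_iff.1 ((hBv x hx).trans hcol)).symm.trans hblk.symm
    have := (card_le_card hsub).trans (card_block_le hπ (π u).1)
    rw [card_union_of_disjoint hAB] at this
    omega
  · rcases blockColor.eq_castSucc_of_ne hblk with hu | hv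
    · have := card_le_of_forall_blockColor_eq_castSucc hπ (Ne.symm hblk)
        fun x hx => (hBv x hx).trans (huv.symm.trans hu)
      omega
    · have := card_le_of_forall_blockColor_eq_castSucc hπ hblk
        fun x hx => (hAu x hx).trans (huv.symm.trans hv)
      omega

end Labelling

theorem exists_label_card_fiber_le (m n : ℕ) :
    ∃ π : Fin (2 * m * n) → Fin m × Bool, ∀ p, #{x | π x = p} ≤ n := by
  have hcard : Fintype.card ((Fin m × Bool) × Fin n) = 2 * m * n := by
    simp only [Fintype.card_prod, Fintype.card_fin, Fintype.card_bool]
    ring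
  let e := (Fintype.equivFinOfCardEq hcard).symm
  refine ⟨fun x => (e x).1, fun p => ?_⟩
  calc #{x | (e x).1 = p}
      ≤ #(univ : Finset (Fin n)) :=
        card_le_card_of_injOn (fun x => (e x).2) (fun _ _ => mem_univ _)
          fun x hx y hy hxy => e.injective (Prod.ext (by simp_all) hxy)
    _ = n := card_fin n

theorem exists_coloring_not_hasMonoDoubleStar (m n : ℕ) :
    ∃ c : Fin (2 * m * n) → Fin (2 * m * n) → Fin (m + 1),
      (∀ u v, c u v = c v u) ∧ ¬ HasMonoDoubleStar (2 * m * n) (m + 1) n n c := by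
  obtain ⟨π, hπ⟩ := exists_label_card_fiber_le m n
  exact ⟨fun x y => blockColor m (π x) (π y), fun x y => blockColor.comm (π x) (π y),
    not_hasMonoDoubleStar_blockColor hπ⟩

theorem stmt3_general (r n : ℕ) :
    ∃ c : Fin (2*(r-1)*n) → Fin (2*(r-1)*n) → Fin r,
      (∀ u v, c u v = c v u) ∧ ¬ HasMonoDoubleStar (2*(r-1)*n) r n n c := by
  cases r with
  | zero =>
    exact ⟨fun u => absurd u.isLt (by simp), fun u => absurd u.isLt (by simp),
      fun ⟨u, _⟩ => absurd u.isLt (by simp)⟩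
  | succ m => exact exists_coloring_not_hasMonoDoubleStar m n

/-- `R_r(S_{n,n}) ≥ (r-1)·2n + 1`: there is an `r`-coloring of `K_{2(r-1)n}` with
no monochromatic `S_{n,n}`. -/
theorem stmt3 (r n : ℕ) (hr : 3 ≤ r) (hn : 1 ≤ n) :
    ∃ c : Fin (2*(r-1)*n) → Fin (2*(r-1)*n) → Fin r,
      (∀ u v, c u v = c v u) ∧ ¬ HasMonoDoubleStar (2*(r-1)*n) r n n c :=
  stmt3_general r n
end

section
/- For all integers r ≥ 1 and n ≥ 1, if G is a simple graph on exactly 2rn+2 vertices whose number of edges e(G) satisfies r·e(G) ≥ (2rn+2)(2rn+1)/2 (that is, e(G) ≥ (1/r)·binom(2rn+2, 2)), then G contains the double star S_{n,n} as a subgraph. -/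
/-!
If `e(G) > n·|V(G)|`, weight each vertex by `2`, `1` or `0` according as its degree is at most
`n`, at most `2n`, or larger. Every vertex then has weight times degree at most `2n`, so the
weights summed over both ends of all edges give at most `2n·|V(G)| < 2e(G)`. Hence some edge
`uv` has ends of total weight below `2`, i.e. `deg u ≥ 2n+1` and `deg v ≥ n+1`. Greedily picking
`n` neighbours of `v` other than `u`, and then `n` neighbours of `u` avoiding these and `v`,
gives `S_{n,n}`. The bound `r·e(G) ≥ C(2rn+2, 2)` forces `e(G) > n(2rn+2)`.
-/

/-- A simple graph `G` contains the double star `S_{k,l}`: there are distinct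
vertices `u, v`, leaves `a i` of `u` and `b j` of `v`, all distinct, with all the
required adjacencies. -/
def GraphHasDoubleStar {V : Type*} (G : SimpleGraph V) (k l : ℕ) : Prop :=
  ∃ (u v : V) (a : Fin k → V) (b : Fin l → V),
    u ≠ v ∧ Function.Injective a ∧ Function.Injective b ∧
    (∀ i, a i ≠ u ∧ a i ≠ v) ∧ (∀ j, b j ≠ u ∧ b j ≠ v) ∧
    (∀ i j, a i ≠ b j) ∧
    G.Adj u v ∧ (∀ i, G.Adj u (a i)) ∧ (∀ j, G.Adj v (b j))

open Finset

theorem exists_injective_fin_mem_of_le_card {α : Type*} {s : Finset α} {k : ℕ} (h : k ≤ #s) :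
    ∃ a : Fin k → α, Function.Injective a ∧ ∀ i, a i ∈ s := by
  obtain ⟨f⟩ := Function.Embedding.nonempty_of_card_le (α := Fin k) (β := s) (by simpa using h)
  exact ⟨fun i => f i, Subtype.val_injective.comp f.injective, fun i => (f i).2⟩

namespace SimpleGraph

variable {V : Type*} [Fintype V] (G : SimpleGraph V) [DecidableRel G.Adj]

theorem sum_dart_fst {M : Type*} [AddCommMonoid M] [DecidableEq V] (f : V → M) :
    ∑ d : G.Dart, f d.fst = ∑ v, G.degree v • f v := by
  rw [← sum_fiberwise univ (fun d : G.Dart => d.fst)]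
  refine sum_congr rfl fun v _ => ?_
  rw [sum_congr rfl fun d hd => congrArg f (mem_filter.1 hd).2, sum_const,
    dart_fst_fiber_card_eq_degree]

theorem sum_dart_snd {M : Type*} [AddCommMonoid M] (f : V → M) :
    ∑ d : G.Dart, f d.snd = ∑ d : G.Dart, f d.fst :=
  Fintype.sum_bijective Dart.symm Dart.symm_involutive.bijective _ _ fun _ => rfl

theorem card_edgeFinset_le_of_forall_adj (n : ℕ)
    (h : ∀ u v, G.Adj u v → 2 * n + 1 ≤ G.degree u → G.degree v ≤ n) :
    #G.edgeFinset ≤ n * Fintype.card V := by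
  classical
  let y : V → ℕ := fun v => if G.degree v ≤ n then 2 else if G.degree v ≤ 2 * n then 1 else 0
  have hy_adj : ∀ d : G.Dart, 2 ≤ y d.fst + y d.snd := fun d => by
    have := h _ _ d.adj
    have := h _ _ d.adj.symm
    simp only [y]
    split_ifs <;> omega
  have hy_degree : ∀ v, G.degree v * y v ≤ 2 * n := fun v => by
    simp only [y]
    split_ifs <;> nlinarith
  suffices 4 * #G.edgeFinset ≤ 4 * (n * Fintype.card V) by omega
  calc
    4 * #G.edgeFinset = ∑ _d : G.Dart, 2 := by
      rw [sum_const, card_univ, dart_card_eq_twice_card_edges, smul_eq_mul]; ring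
    _ ≤ ∑ d : G.Dart, (y d.fst + y d.snd) := sum_le_sum fun d _ => hy_adj d
    _ = 2 * ∑ v, G.degree v * y v := by
      simp only [sum_add_distrib, sum_dart_snd, sum_dart_fst, smul_eq_mul, two_mul]
    _ ≤ 2 * ∑ _v : V, 2 * n := Nat.mul_le_mul_left 2 (sum_le_sum fun v _ => hy_degree v)
    _ = 4 * (n * Fintype.card V) := by rw [sum_const, card_univ, smul_eq_mul]; ring

variable {G} in
theorem graphHasDoubleStar_of_adj [DecidableEq V] {u v : V} {k l : ℕ} (huv : G.Adj u v)
    (hu : k + l + 1 ≤ G.degree u) (hv : l + 1 ≤ G.degree v) : GraphHasDoubleStar G k l := by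
  obtain ⟨b, hb_inj, hb⟩ := exists_injective_fin_mem_of_le_card (k := l)
    (s := (G.neighborFinset v).erase u)
    (by rw [card_erase_of_mem (by simpa using huv.symm), card_neighborFinset_eq_degree]; omega)
  have hB : #(insert v (univ.image b)) ≤ l + 1 :=
    (card_insert_le _ _).trans (by simpa using card_image_le (s := univ) (f := b))
  obtain ⟨a, ha_inj, ha⟩ := exists_injective_fin_mem_of_le_card (k := k)
    (s := G.neighborFinset u \ insert v (univ.image b))
    ((le_card_sdiff _ _).trans' (by rw [card_neighborFinset_eq_degree]; omega))
  simp only [mem_erase, mem_sdiff, mem_insert, mem_image, mem_univ, true_and,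
    mem_neighborFinset, not_or, not_exists] at ha hb
  refine ⟨u, v, a, b, huv.ne, ha_inj, hb_inj, fun i => ⟨(ha i).1.ne', (ha i).2.1⟩,
    fun j => ⟨(hb j).1, (hb j).2.ne'⟩, fun i j => Ne.symm ((ha i).2.2 j), huv,
    fun i => (ha i).1, fun j => (hb j).2⟩

end SimpleGraph

theorem stmt4_general (r n : ℕ)
    (G : SimpleGraph (Fin (2*r*n+2))) [DecidableRel G.Adj]
    (hE : (2*r*n+2)*(2*r*n+1)/2 ≤ r * G.edgeFinset.card) :
    GraphHasDoubleStar G n n := by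
  have hmany : n * Fintype.card (Fin (2*r*n+2)) < #G.edgeFinset := by
    rw [Fintype.card_fin]
    refine Nat.lt_of_mul_lt_mul_left (a := r) (lt_of_lt_of_le ?_ hE)
    rw [show (2*r*n+2)*(2*r*n+1) = 2 * ((r*n+1)*(2*r*n+1)) by ring,
      Nat.mul_div_cancel_left _ two_pos]
    nlinarith
  obtain ⟨u, v, huv, hu, hv⟩ :
      ∃ u v, G.Adj u v ∧ 2 * n + 1 ≤ G.degree u ∧ n + 1 ≤ G.degree v := by
    by_contra! h
    exact hmany.not_ge <| G.card_edgeFinset_le_of_forall_adj n fun u v huv hu =>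
      Nat.le_of_lt_succ (h u v huv hu)
  exact SimpleGraph.graphHasDoubleStar_of_adj huv (by omega) hv

/-- If `G` has `2rn+2` vertices and `e(G) ≥ (1/r)·C(2rn+2, 2)`, then `S_{n,n} ⊆ G`. -/
theorem stmt4 (r n : ℕ) (hr : 1 ≤ r) (hn : 1 ≤ n)
    (G : SimpleGraph (Fin (2*r*n+2))) [DecidableRel G.Adj]
    (hE : (2*r*n+2)*(2*r*n+1)/2 ≤ r * G.edgeFinset.card) :
    GraphHasDoubleStar G n n :=
  stmt4_general r n G hE
end

section
/- For all integers k ≥ 1 and n ≥ 2, setting r = 2k and N = (3k-1)n, there exists an r-coloring of the edges of the complete bipartite graph K_{N,N} that contains no monochromatic copy of the double star S_{n,n}. (Equivalently, for even r, R^bip_r(S_{n,n}) ≥ (3r/2 - 1)n + 1.) -/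
open Function

def IsStarForestColoring {α β γ : Type*} (M : α → β → γ) : Prop :=
  ∀ i j, (∀ j', M i j' = M i j → j' = j) ∨ (∀ i', M i' j = M i j → i' = i)

lemma IsStarForestColoring.of_comp {α β γ δ : Type*} {M : α → β → γ} {f : γ → δ}
    (h : IsStarForestColoring fun i j => f (M i j)) : IsStarForestColoring M := fun i j =>
  (h i j).imp (fun hrow j' hj' => hrow j' (congrArg f hj'))
    (fun hcol i' hi' => hcol i' (congrArg f hi'))

def blowup {m r : ℕ} (M : Fin m → Fin m → Fin r) (n : ℕ) (x y : Fin (m * n)) : Fin r :=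
  M x.divNat y.divNat

lemma not_injective_of_forall_divNat_eq {m n : ℕ} (f : Fin (n + 1) → Fin (m * n)) (V : Fin m)
    (hf : ∀ t, (f t).divNat = V) : ¬ Injective f := by
  intro hinj
  have hmod : Injective fun t => (f t).modNat := fun s t hst =>
    hinj <| finProdFinEquiv.symm.injective <| Prod.ext ((hf s).trans (hf t).symm) hst
  simpa using Fintype.card_le_of_injective _ hmod

theorem not_bipHasMonoDoubleStar_blowup {m r : ℕ} {M : Fin m → Fin m → Fin r}
    (hM : IsStarForestColoring M) (n : ℕ) :
    ¬ BipHasMonoDoubleStar (m * n) r n n (blowup M n) := by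
  rintro ⟨u, v, a, b, col, ha, hb, hav, hbu, huv, hua, hbv⟩
  rcases hM u.divNat v.divNat with hrow | hcol
  · refine not_injective_of_forall_divNat_eq (Fin.cons v a) v.divNat
      (Fin.cases rfl fun t => hrow _ ((hua t).trans huv.symm))
      (Fin.cons_injective_iff.2 ⟨?_, ha⟩)
    rintro ⟨t, rfl⟩
    exact hav t rfl
  · refine not_injective_of_forall_divNat_eq (Fin.cons u b) u.divNat
      (Fin.cases rfl fun t => hcol _ ((hbv t).trans huv.symm))
      (Fin.cons_injective_iff.2 ⟨?_, hb⟩)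
    rintro ⟨t, rfl⟩
    exact hbu t rfl

/-!
For `k ≥ 3`, rows and columns alike are sorted into `2k` classes, one per colour: `v < 2k` is
member `0` of class `v`, and `v ≥ 2k` is member `1` of class `v - 2k`. So the classes below
`k - 1` are pairs, while the `k + 1` classes `k - 1, …, 2k - 1` are singletons, ordered cyclically
by `next`. A cell outside the diagonal blocks gets the colour of its row class or of its column
class, the parities being chosen so that the two members of a paired class get disjoint stars.
The diagonal blocks are coloured by matchings in the colours of the singleton classes; for a
paired class this takes four of them, whence `k ≥ 3`.
-/

namespace StarForestColoring

def next (k a : ℕ) : ℕ := if a = 2 * k - 1 then k - 1 else a + 1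

def classColor (k a p b q : ℕ) : ℕ :=
  if a = b then (if a < k - 1 then k - 1 + p + 2 * q else next k a)
  else if a < k - 1 then
    (if b < k - 1 then (if p = q then a else b)
     else (if (b + k + 1) % 2 = p then a else b))
  else if b < k - 1 then (if q = (a - (k - 1)) / 2 % 2 then b else a)
  else (if b = next k a then a else b)

def IsClassMember (k a p : ℕ) : Prop := a < 2 * k ∧ p ≤ 1 ∧ (p = 1 → a < k - 1)

lemma classColor_lt {k a p b q : ℕ} (hk : 3 ≤ k) (hv : IsClassMember k a p)
    (hw : IsClassMember k b q) : classColor k a p b q < 2 * k := by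
  unfold IsClassMember at hv hw
  simp only [classColor, next]
  split_ifs <;> omega

lemma eq_of_classColor_eq_left {k a p b q a' p' : ℕ} (hk : 3 ≤ k)
    (hv : IsClassMember k a p) (hw : IsClassMember k b q) (hv' : IsClassMember k a' p')
    (hrow : classColor k a p b q = a)
    (h : classColor k a' p' b q = classColor k a p b q) : a' = a ∧ p' = p := by
  unfold IsClassMember at hv hw hv'
  simp only [classColor, next] at hrow h
  split_ifs at hrow h <;> omega

lemma eq_of_classColor_eq_right {k a p b q b' q' : ℕ}
    (hv : IsClassMember k a p) (hw : IsClassMember k b q) (hw' : IsClassMember k b' q')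
    (hrow : classColor k a p b q ≠ a)
    (h : classColor k a p b' q' = classColor k a p b q) : b' = b ∧ q' = q := by
  unfold IsClassMember at hv hw hw'
  simp only [classColor, next] at hrow h
  split_ifs at hrow h <;> omega

def classOf (k v : ℕ) : ℕ := if v < 2 * k then v else v - 2 * k

def memberOf (k v : ℕ) : ℕ := if v < 2 * k then 0 else 1

lemma isClassMember_of_lt {k v : ℕ} (hv : v < 3 * k - 1) :
    IsClassMember k (classOf k v) (memberOf k v) := by
  unfold IsClassMember classOf memberOf
  split_ifs with h
  · exact ⟨h, zero_le_one, False.elim⟩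
  · exact ⟨by omega, le_rfl, fun _ => by omega⟩

lemma eq_of_classOf_eq_of_memberOf_eq {k v w : ℕ} (hclass : classOf k v = classOf k w)
    (hmember : memberOf k v = memberOf k w) : v = w := by
  unfold classOf memberOf at *
  split_ifs at hclass hmember <;> omega

def pattern (k i j : ℕ) : ℕ :=
  classColor k (classOf k i) (memberOf k i) (classOf k j) (memberOf k j)

lemma isStarForestColoring_pattern {k : ℕ} (hk : 3 ≤ k) :
    IsStarForestColoring fun i j : Fin (3 * k - 1) => pattern k i j := by
  have hmem (v : Fin (3 * k - 1)) := isClassMember_of_lt v.2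
  intro i j
  by_cases hrow : pattern k i j = classOf k i
  · refine Or.inr fun i' h => Fin.ext ?_
    obtain ⟨hclass, hmember⟩ := eq_of_classColor_eq_left hk (hmem i) (hmem j) (hmem i') hrow h
    exact eq_of_classOf_eq_of_memberOf_eq hclass hmember
  · refine Or.inl fun j' h => Fin.ext ?_
    obtain ⟨hclass, hmember⟩ := eq_of_classColor_eq_right (hmem i) (hmem j) (hmem j') hrow h
    exact eq_of_classOf_eq_of_memberOf_eq hclass hmember

end StarForestColoring

open StarForestColoring in
lemma exists_isStarForestColoring {k : ℕ} (hk : 1 ≤ k) :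
    ∃ M : Fin (3 * k - 1) → Fin (3 * k - 1) → Fin (2 * k), IsStarForestColoring M := by
  obtain rfl | rfl | hk := show k = 1 ∨ k = 2 ∨ 3 ≤ k by omega
  · exact ⟨![![0, 1], ![1, 0]], by unfold IsStarForestColoring; decide⟩
  · refine ⟨![![0, 0, 0, 1, 1], ![1, 2, 3, 0, 2], ![1, 3, 2, 0, 3], ![2, 1, 3, 2, 0],
      ![3, 1, 2, 3, 0]], ?_⟩
    unfold IsStarForestColoring
    decide
  · exact ⟨fun i j => ⟨pattern k i j, classColor_lt hk (isClassMember_of_lt i.2)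
      (isClassMember_of_lt j.2)⟩,
      IsStarForestColoring.of_comp (f := Fin.val) (isStarForestColoring_pattern hk)⟩

theorem stmt6_general (k n : ℕ) (hk : 1 ≤ k) :
    ∃ c : Fin ((3*k-1)*n) → Fin ((3*k-1)*n) → Fin (2*k),
      ¬ BipHasMonoDoubleStar ((3*k-1)*n) (2*k) n n c := by
  obtain ⟨M, hM⟩ := exists_isStarForestColoring hk
  exact ⟨blowup M n, not_bipHasMonoDoubleStar_blowup hM n⟩

/-- For even `r = 2k`, `R^bip_r(S_{n,n}) ≥ (3r/2 - 1)n + 1`: there is a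
`2k`-coloring of `K_{(3k-1)n,(3k-1)n}` with no monochromatic `S_{n,n}`. -/
theorem stmt6 (k n : ℕ) (hk : 1 ≤ k) (hn : 2 ≤ n) :
    ∃ c : Fin ((3*k-1)*n) → Fin ((3*k-1)*n) → Fin (2*k),
      ¬ BipHasMonoDoubleStar ((3*k-1)*n) (2*k) n n c :=
  stmt6_general k n hk
end

section
/- Let t ≥ s > n ≥ 2 be integers and let G be the complete bipartite graph with parts X and Y of sizes t and s respectively. If s - ⌊sn/t⌋ ≤ n, then there is a coloring of the edges of G with colors {1,2} such that every vertex of X is incident to at most n edges of color 1 and every vertex of Y is incident to at most n edges of color 2. -/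
/-!
Cut `0, 1, …, t n - 1` into consecutive blocks of length `n`, block `x` belonging to `x ∈ X`,
and give the edge `x y` the first colour exactly when block `x` meets the residue class of `y`
modulo `s`. A block meets at most `n` classes. Conversely, the floor hypothesis says
`(t - n) s ≤ t n`, so the integers `y + m s` with `m < t - n` all lie in some block; as `n ≤ s`
they lie in distinct blocks, so at most `n` vertices of `X` give `y` the second colour.
-/

open Finset

lemma Fin.card_filter_val (n : ℕ) (p : ℕ → Prop) [DecidablePred p] :
    #{x : Fin n | p x} = #{x ∈ Iio n | p x} := by
  rw [← Fin.map_valEmbedding_univ, filter_map, card_map]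
  rfl

def residueBlock (s n x : ℕ) : Finset ℕ :=
  (Ico (x * n) (x * n + n)).image (· % s)

def blockColoring (t s n : ℕ) : Fin t → Fin s → Fin 2 :=
  fun x y => if (y : ℕ) ∈ residueBlock s n x then 0 else 1

lemma blockColoring_eq_zero_iff {t s n : ℕ} (x : Fin t) (y : Fin s) :
    blockColoring t s n x y = 0 ↔ (y : ℕ) ∈ residueBlock s n x := by
  unfold blockColoring; split_ifs <;> simp [*]

lemma blockColoring_eq_one_iff {t s n : ℕ} (x : Fin t) (y : Fin s) :
    blockColoring t s n x y = 1 ↔ (y : ℕ) ∉ residueBlock s n x := by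
  unfold blockColoring; split_ifs <;> simp [*]

lemma card_residueBlock_le (s n x : ℕ) : #(residueBlock s n x) ≤ n :=
  card_image_le.trans (by simp)

lemma mod_mem_residueBlock_div {s n : ℕ} (hn : 0 < n) (k : ℕ) :
    k % s ∈ residueBlock s n (k / n) :=
  mem_image_of_mem _ (mem_Ico.2 ⟨Nat.div_mul_le_self k n, Nat.lt_div_mul_add hn⟩)

lemma strictMono_add_mul_div {s n : ℕ} (hn : 0 < n) (hns : n ≤ s) (y : ℕ) :
    StrictMono fun m => (y + m * s) / n :=
  strictMono_nat_of_lt_succ fun m => calc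
    (y + m * s) / n < (y + m * s + n) / n := by rw [Nat.add_div_right _ hn]; omega
    _ ≤ (y + (m + 1) * s) / n := Nat.div_le_div_right (by rw [add_mul]; omega)

lemma sub_le_card_filter_mem_residueBlock {t s n y : ℕ} (hn : 0 < n) (hns : n ≤ s)
    (hy : y < s) (hcap : (t - n) * s ≤ t * n) :
    t - n ≤ #{x ∈ Iio t | y ∈ residueBlock s n x} := by
  have hsub : (range (t - n)).image (fun m => (y + m * s) / n) ⊆
      {x ∈ Iio t | y ∈ residueBlock s n x} := by
    simp only [subset_iff, mem_image, mem_range, mem_filter, mem_Iio]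
    rintro _ ⟨m, hm, rfl⟩
    refine ⟨Nat.div_lt_of_lt_mul ?_, ?_⟩
    · calc y + m * s < (m + 1) * s := by rw [add_mul]; omega
        _ ≤ (t - n) * s := Nat.mul_le_mul_right s hm
        _ ≤ n * t := by rw [mul_comm n]; exact hcap
    · simpa [Nat.mod_eq_of_lt hy] using mod_mem_residueBlock_div (s := s) hn (y + m * s)
  calc t - n = #((range (t - n)).image fun m => (y + m * s) / n) := by
        rw [card_image_of_injective _ (strictMono_add_mul_div hn hns y).injective, card_range]
    _ ≤ _ := card_le_card hsub

lemma card_blockColoring_eq_zero_le {t s : ℕ} (n : ℕ) (x : Fin t) :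
    #{y : Fin s | blockColoring t s n x y = 0} ≤ n := by
  simp only [blockColoring_eq_zero_iff]
  rw [Fin.card_filter_val s (· ∈ residueBlock s n x)]
  exact (card_le_card fun _ h => (mem_filter.1 h).2).trans (card_residueBlock_le s n x)

lemma card_blockColoring_eq_one_le {t s n : ℕ} (hn : 0 < n) (hns : n ≤ s)
    (hcap : (t - n) * s ≤ t * n) (y : Fin s) :
    #{x : Fin t | blockColoring t s n x y = 1} ≤ n := by
  have hfirst := sub_le_card_filter_mem_residueBlock hn hns y.isLt hcap
  rw [← Fin.card_filter_val t (y.val ∈ residueBlock s n ·)] at hfirst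
  have hsplit := card_filter_add_card_filter_not (s := (univ : Finset (Fin t)))
    fun x => (y : ℕ) ∈ residueBlock s n x
  simp only [card_univ, Fintype.card_fin] at hsplit
  simp only [blockColoring_eq_one_iff]
  omega

lemma sub_mul_le_mul_of_sub_le_div {t s n : ℕ} (h : s - s * n / t ≤ n) :
    (t - n) * s ≤ t * n := by
  rcases Nat.eq_zero_or_pos t with rfl | ht
  · simp
  have h' : (s - n) * t ≤ s * n :=
    (Nat.le_div_iff_mul_le ht).1 (by generalize s * n / t = q at h; omega)
  rw [Nat.sub_mul, tsub_le_iff_right] at h' ⊢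
  linarith

theorem stmt8_general (t s n : ℕ) (hsn : n < s)
    (hfloor : s - s * n / t ≤ n) :
    ∃ c : Fin t → Fin s → Fin 2,
      (∀ x : Fin t, (Finset.univ.filter (fun y => c x y = 0)).card ≤ n) ∧
      (∀ y : Fin s, (Finset.univ.filter (fun x => c x y = 1)).card ≤ n) := by
  have hn : 0 < n := Nat.pos_of_ne_zero (by rintro rfl; simp at hfloor; omega)
  exact ⟨blockColoring t s n, card_blockColoring_eq_zero_le n,
    card_blockColoring_eq_one_le hn hsn.le (sub_mul_le_mul_of_sub_le_div hfloor)⟩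

/-- Lemma: for `t ≥ s > n ≥ 2` with `s - ⌊sn/t⌋ ≤ n`, the complete bipartite graph
with parts of sizes `t` and `s` has a `2`-coloring (colors `0` and `1` standing for
colors `1` and `2`) in which every vertex of `X` is on at most `n` edges of the first
color and every vertex of `Y` is on at most `n` edges of the second color. -/
theorem stmt8 (t s n : ℕ) (hts : s ≤ t) (hsn : n < s) (hn : 2 ≤ n)
    (hfloor : s - s * n / t ≤ n) :
    ∃ c : Fin t → Fin s → Fin 2,
      (∀ x : Fin t, (Finset.univ.filter (fun y => c x y = 0)).card ≤ n) ∧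
      (∀ y : Fin s, (Finset.univ.filter (fun x => c x y = 1)).card ≤ n) :=
  stmt8_general t s n hsn hfloor
end

section
/- Let n ≥ 1 and let G be a simple graph on N ≥ 2n+2 vertices. Let L(G) = {v : deg(v) ≥ 2n+1} and S(G) = {v : deg(v) ≤ n}. If L(G) is nonempty, then either G contains a copy of the double star S_{n1,n2} for every pair of integers n1, n2 ≥ 1 with n1 + n2 = 2n, or the sum of the degrees of the vertices in L(G) equals the number of edges of G with one endpoint in L(G) and the other endpoint in S(G) (in particular, S(G) is nonempty). -/
open Finset

lemma exists_injective_fin_forall_mem {V : Type*} {s : Finset V} {k : ℕ} (hk : k ≤ #s) :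
    ∃ a : Fin k → V, Function.Injective a ∧ ∀ i, a i ∈ s :=
  ⟨fun i => s.equivFin.symm (Fin.castLE hk i),
    Subtype.val_injective.comp (s.equivFin.symm.injective.comp (Fin.castLE_injective hk)),
    fun i => (s.equivFin.symm (Fin.castLE hk i)).2⟩

namespace GraphHasDoubleStar

variable {V : Type*} {G : SimpleGraph V}

lemma symm {k l : ℕ} (h : GraphHasDoubleStar G k l) : GraphHasDoubleStar G l k := by
  obtain ⟨u, v, a, b, huv, ha, hb, hau, hbv, hab, hadj, hua, hvb⟩ := h
  exact ⟨v, u, b, a, huv.symm, hb, ha, fun j => (hbv j).symm, fun i => (hau i).symm,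
    fun j i => (hab i j).symm, hadj.symm, hvb, hua⟩

lemma of_adj [Fintype V] [DecidableRel G.Adj] {u v : V} (huv : G.Adj u v) {k l : ℕ}
    (hu : k + l + 1 ≤ G.degree u) (hv : l + 1 ≤ G.degree v) : GraphHasDoubleStar G k l := by
  classical
  have hB : l ≤ #((G.neighborFinset v).erase u) := by
    rw [card_erase_of_mem (by simpa using huv.symm), G.card_neighborFinset_eq_degree]
    omega
  obtain ⟨b, hb, hbN⟩ := exists_injective_fin_forall_mem hB
  have hA : k ≤ #(G.neighborFinset u \ insert v (univ.image b)) := by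
    have hcard : #(insert v (univ.image b)) ≤ l + 1 :=
      (card_insert_le _ _).trans (by simpa using card_image_le (s := univ) (f := b))
    have := le_card_sdiff (insert v (univ.image b)) (G.neighborFinset u)
    rw [G.card_neighborFinset_eq_degree] at this
    omega
  obtain ⟨a, ha, haN⟩ := exists_injective_fin_forall_mem hA
  simp only [mem_sdiff, mem_insert, mem_image, mem_univ, true_and, not_or, not_exists,
    SimpleGraph.mem_neighborFinset] at haN
  simp only [mem_erase, SimpleGraph.mem_neighborFinset] at hbN
  exact ⟨u, v, a, b, huv.ne, ha, hb, fun i => ⟨(haN i).1.ne.symm, (haN i).2.1⟩,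
    fun j => ⟨(hbN j).1, (hbN j).2.ne.symm⟩, fun i j h => (haN i).2.2 j h.symm, huv,
    fun i => (haN i).1, fun j => (hbN j).2⟩

end GraphHasDoubleStar

lemma SimpleGraph.degree_le_of_adj_of_not_graphHasDoubleStar {V : Type*} [Fintype V]
    {G : SimpleGraph V} [DecidableRel G.Adj] {n k l : ℕ} (hkl : k + l = 2 * n)
    (hG : ¬ GraphHasDoubleStar G k l) {v w : V} (hv : 2 * n + 1 ≤ G.degree v) (hvw : G.Adj v w) :
    G.degree w ≤ n := by
  by_contra! hw
  rcases le_total l n with hl | hk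
  · exact hG (.of_adj hvw (by omega) (by omega))
  · exact hG (GraphHasDoubleStar.of_adj (k := l) hvw (by omega) (by omega)).symm

theorem stmt9_general {V : Type*} [Fintype V] (n : ℕ)
    (G : SimpleGraph V) [DecidableRel G.Adj]
    (hL : (Finset.univ.filter (fun v => 2*n+1 ≤ G.degree v)).Nonempty) :
    (∀ n1 n2 : ℕ, 1 ≤ n1 → 1 ≤ n2 → n1 + n2 = 2*n → GraphHasDoubleStar G n1 n2) ∨
    ((∑ v ∈ Finset.univ.filter (fun v => 2*n+1 ≤ G.degree v), G.degree v) =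
       (∑ v ∈ Finset.univ.filter (fun v => 2*n+1 ≤ G.degree v),
         (Finset.univ.filter (fun w => G.degree w ≤ n ∧ G.Adj v w)).card) ∧
     (Finset.univ.filter (fun v => G.degree v ≤ n)).Nonempty) := by
  refine or_iff_not_imp_left.mpr fun hG => ?_
  push Not at hG
  obtain ⟨k, l, -, -, hkl, hfree⟩ := hG
  have hsmall {v w : V} (hv : 2 * n + 1 ≤ G.degree v) (hvw : G.Adj v w) : G.degree w ≤ n :=
    G.degree_le_of_adj_of_not_graphHasDoubleStar hkl hfree hv hvw
  constructor
  · refine sum_congr rfl fun v hv => ?_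
    rw [← G.card_neighborFinset_eq_degree, G.neighborFinset_eq_filter]
    exact congrArg card <|
      filter_congr fun w _ => ⟨fun h => ⟨hsmall (mem_filter.1 hv).2 h, h⟩, And.right⟩
  · obtain ⟨v, hv⟩ := hL
    obtain ⟨w, hvw⟩ := G.degree_pos_iff_exists_adj v |>.1 (by rw [mem_filter] at hv; omega)
    exact ⟨w, mem_filter.2 ⟨mem_univ w, hsmall (mem_filter.1 hv).2 hvw⟩⟩

/-- With `L(G) = {v : deg v ≥ 2n+1}` and `S(G) = {v : deg v ≤ n}`: if `L(G) ≠ ∅`,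
then either `G` contains every double star on `2n+2` vertices, or
`∑_{v ∈ L(G)} deg v = e(L(G), S(G))` (in particular `S(G) ≠ ∅`). -/
theorem stmt9 {V : Type*} [Fintype V] [DecidableEq V] (n : ℕ) (hn : 1 ≤ n)
    (G : SimpleGraph V) [DecidableRel G.Adj] (hV : 2*n+2 ≤ Fintype.card V)
    (hL : (Finset.univ.filter (fun v => 2*n+1 ≤ G.degree v)).Nonempty) :
    (∀ n1 n2 : ℕ, 1 ≤ n1 → 1 ≤ n2 → n1 + n2 = 2*n → GraphHasDoubleStar G n1 n2) ∨
    ((∑ v ∈ Finset.univ.filter (fun v => 2*n+1 ≤ G.degree v), G.degree v) =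
       (∑ v ∈ Finset.univ.filter (fun v => 2*n+1 ≤ G.degree v),
         (Finset.univ.filter (fun w => G.degree w ≤ n ∧ G.Adj v w)).card) ∧
     (Finset.univ.filter (fun v => G.degree v ≤ n)).Nonempty) :=
  stmt9_general n G hL
end

section
/- Fix integers r ≥ 2, n ≥ 1, N ≥ rn+1 and an r-coloring of the edges of the complete bipartite graph K_{N,N} with parts X and Y that contains no monochromatic copy of S_{n,n}. Then for every color i ∈ {1,...,r}: x_i · (N - (r-1)n) ≤ n·N and y_i · (N - (r-1)n) ≤ n·N, where x_i (resp. y_i) is the number of vertices of X (resp. Y) whose unique received color is i. -/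
/-- The number of edges of color `i` incident to the vertex `x ∈ X`. -/
def dX (N r : ℕ) (c : Fin N → Fin N → Fin r) (i : Fin r) (x : Fin N) : ℕ :=
  (Finset.univ.filter (fun y => c x y = i)).card

/-- The number of edges of color `i` incident to the vertex `y ∈ Y`. -/
def dY (N r : ℕ) (c : Fin N → Fin N → Fin r) (i : Fin r) (y : Fin N) : ℕ :=
  (Finset.univ.filter (fun x => c x y = i)).card

/-- `x_i`: the number of vertices of `X` whose unique received color is `i`
(a vertex receives color `j` if it is incident to at least `n+1` edges of color `j`). -/
def xcount (n N r : ℕ) (c : Fin N → Fin N → Fin r) (i : Fin r) : ℕ :=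
  (Finset.univ.filter (fun x : Fin N =>
    n + 1 ≤ dX N r c i x ∧ ∀ j : Fin r, n + 1 ≤ dX N r c j x → j = i)).card

/-- `y_i`: the number of vertices of `Y` whose unique received color is `i`. -/
def ycount (n N r : ℕ) (c : Fin N → Fin N → Fin r) (i : Fin r) : ℕ :=
  (Finset.univ.filter (fun y : Fin N =>
    n + 1 ≤ dY N r c i y ∧ ∀ j : Fin r, n + 1 ≤ dY N r c j y → j = i)).card

/-- `z_i`: the number of vertices of `X ∪ Y` receiving exactly `i` colors. -/
def zcount (n N r : ℕ) (c : Fin N → Fin N → Fin r) (i : ℕ) : ℕ :=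
  (Finset.univ.filter (fun x : Fin N =>
    (Finset.univ.filter (fun j : Fin r => n + 1 ≤ dX N r c j x)).card = i)).card +
  (Finset.univ.filter (fun y : Fin N =>
    (Finset.univ.filter (fun j : Fin r => n + 1 ≤ dY N r c j y)).card = i)).card

/-- `e*`: the number of important edges, i.e. edges whose color is received by at
least one of its endpoints. -/
def estar (n N r : ℕ) (c : Fin N → Fin N → Fin r) : ℕ :=
  (Finset.univ.filter (fun p : Fin N × Fin N =>
    n + 1 ≤ dX N r c (c p.1 p.2) p.1 ∨ n + 1 ≤ dY N r c (c p.1 p.2) p.2)).card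

/-!
Let `S` be the set of vertices of `X` whose unique received color is `i`. A vertex of `S`
receives no other color, so at most `(r-1)n` of its `N` edges avoid color `i`. On the other
hand, a color-`i` neighbour `y` of `S` cannot receive `i` itself, since the edge to `S` would
then be the central edge of a monochromatic `S_{n,n}`; so each `y` sends at most `n` color-`i`
edges to `S`. Counting the color-`i` edges between `S` and `Y` in both ways gives
`|S| (N - (r-1)n) ≤ nN`. The bound for `Y` is the same statement for the transposed coloring.
-/

lemma Finset.exists_injective_fin_of_le_card {α : Type*} {s : Finset α} {n : ℕ}
    (h : n ≤ s.card) : ∃ a : Fin n → α, Function.Injective a ∧ ∀ i, a i ∈ s := by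
  obtain ⟨e⟩ := Function.Embedding.nonempty_of_card_le (α := Fin n) (β := s) (by simpa using h)
  exact ⟨fun i => e i, Subtype.val_injective.comp e.injective, fun i => (e i).2⟩

section DoubleStar

variable {N r n : ℕ} (c : Fin N → Fin N → Fin r)

lemma bipHasMonoDoubleStar_of_le_dX_of_le_dY (u v : Fin N)
    (hu : n + 1 ≤ dX N r c (c u v) u) (hv : n + 1 ≤ dY N r c (c u v) v) :
    BipHasMonoDoubleStar N r n n c := by
  have hA : n ≤ ((Finset.univ.filter fun y => c u y = c u v).erase v).card := by
    rw [Finset.card_erase_of_mem (by simp)]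
    exact Nat.le_sub_one_of_lt hu
  have hB : n ≤ ((Finset.univ.filter fun x => c x v = c u v).erase u).card := by
    rw [Finset.card_erase_of_mem (by simp)]
    exact Nat.le_sub_one_of_lt hv
  obtain ⟨a, ha, haA⟩ := Finset.exists_injective_fin_of_le_card hA
  obtain ⟨b, hb, hbB⟩ := Finset.exists_injective_fin_of_le_card hB
  refine ⟨u, v, a, b, c u v, ha, hb, fun i => Finset.ne_of_mem_erase (haA i),
    fun j => Finset.ne_of_mem_erase (hbB j), rfl, fun i => ?_, fun j => ?_⟩
  · simpa using Finset.mem_of_mem_erase (haA i)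
  · simpa using Finset.mem_of_mem_erase (hbB j)

lemma BipHasMonoDoubleStar.of_transpose
    (h : BipHasMonoDoubleStar N r n n fun y x => c x y) : BipHasMonoDoubleStar N r n n c := by
  obtain ⟨u, v, a, b, col, ha, hb, hav, hbu, huv, hua, hbv⟩ := h
  exact ⟨v, u, b, a, col, hb, ha, hbu, hav, huv, hbv, hua⟩

lemma sum_dX_eq (x : Fin N) : ∑ j, dX N r c j x = N := by
  simpa [dX] using (Finset.card_eq_sum_card_fiberwise (f := c x) (s := Finset.univ)
    (t := Finset.univ) fun y _ => Finset.mem_univ _).symm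

lemma sub_le_dX_of_forall_dX_le (i : Fin r) (x : Fin N)
    (hother : ∀ j ≠ i, dX N r c j x ≤ n) : N - (r - 1) * n ≤ dX N r c i x := by
  have hrest : ∑ j ∈ Finset.univ.erase i, dX N r c j x ≤ (r - 1) * n := by
    calc ∑ j ∈ Finset.univ.erase i, dX N r c j x
        ≤ ∑ _j ∈ Finset.univ.erase i, n :=
          Finset.sum_le_sum fun j hj => hother j (Finset.ne_of_mem_erase hj)
      _ = (r - 1) * n := by simp
  have hsum := sum_dX_eq c x
  rw [← Finset.sum_erase_add _ _ (Finset.mem_univ i)] at hsum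
  omega

def uniqueReceiversX (n : ℕ) (i : Fin r) : Finset (Fin N) :=
  Finset.univ.filter fun x => n + 1 ≤ dX N r c i x ∧ ∀ j : Fin r, n + 1 ≤ dX N r c j x → j = i

lemma xcount_eq_card_uniqueReceiversX (i : Fin r) :
    xcount n N r c i = (uniqueReceiversX c n i).card := rfl

lemma ycount_eq_xcount_transpose (i : Fin r) :
    ycount n N r c i = xcount n N r (fun y x => c x y) i := rfl

lemma sub_le_dX_of_mem_uniqueReceiversX {i : Fin r} {x : Fin N}
    (hx : x ∈ uniqueReceiversX c n i) : N - (r - 1) * n ≤ dX N r c i x := by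
  refine sub_le_dX_of_forall_dX_le c i x fun j hj => ?_
  by_contra! hlt
  exact hj ((Finset.mem_filter.1 hx).2.2 j hlt)

lemma dY_le_of_mem_uniqueReceiversX (hno : ¬ BipHasMonoDoubleStar N r n n c) {i : Fin r}
    {x y : Fin N} (hx : x ∈ uniqueReceiversX c n i) (hxy : c x y = i) : dY N r c i y ≤ n := by
  by_contra! hlt
  subst hxy
  exact hno (bipHasMonoDoubleStar_of_le_dX_of_le_dY c x y (Finset.mem_filter.1 hx).2.1 hlt)

lemma xcount_mul_le (hno : ¬ BipHasMonoDoubleStar N r n n c) (i : Fin r) :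
    xcount n N r c i * (N - (r - 1) * n) ≤ n * N := by
  set S := uniqueReceiversX c n i
  have hfiber : ∀ y, (S.filter fun x => c x y = i).card ≤ n := by
    intro y
    obtain hempty | ⟨x, hx⟩ := (S.filter fun x => c x y = i).eq_empty_or_nonempty
    · simp [hempty]
    rw [Finset.mem_filter] at hx
    refine le_trans (Finset.card_le_card fun z hz => ?_)
      (dY_le_of_mem_uniqueReceiversX c hno hx.1 hx.2)
    simp [(Finset.mem_filter.1 hz).2]
  calc xcount n N r c i * (N - (r - 1) * n)
      = S.card • (N - (r - 1) * n) := by rw [xcount_eq_card_uniqueReceiversX, smul_eq_mul]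
    _ ≤ ∑ x ∈ S, dX N r c i x :=
        Finset.card_nsmul_le_sum S _ _ fun x hx => sub_le_dX_of_mem_uniqueReceiversX c hx
    _ = ∑ y, (S.filter fun x => c x y = i).card := by
        simp only [dX, Finset.card_filter]
        exact Finset.sum_comm
    _ ≤ ∑ _y : Fin N, n := Finset.sum_le_sum fun y _ => hfiber y
    _ = n * N := by simp [mul_comm]

end DoubleStar

theorem stmt11_general (r n N : ℕ)
    (c : Fin N → Fin N → Fin r) (hno : ¬ BipHasMonoDoubleStar N r n n c) :
    ∀ i : Fin r,
      xcount n N r c i * (N - (r-1)*n) ≤ n * N ∧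
      ycount n N r c i * (N - (r-1)*n) ≤ n * N :=
  fun i => ⟨xcount_mul_le c hno i, ycount_eq_xcount_transpose c i ▸
    xcount_mul_le (fun y x => c x y) (fun h => hno h.of_transpose) i⟩

/-- Claim `XC_YC`: for every color `i`, `x_i (N - (r-1)n) ≤ nN` and
`y_i (N - (r-1)n) ≤ nN`. -/
theorem stmt11 (r n N : ℕ) (hr : 2 ≤ r) (hn : 1 ≤ n) (hN : r * n + 1 ≤ N)
    (c : Fin N → Fin N → Fin r) (hno : ¬ BipHasMonoDoubleStar N r n n c) :
    ∀ i : Fin r,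
      xcount n N r c i * (N - (r-1)*n) ≤ n * N ∧
      ycount n N r c i * (N - (r-1)*n) ≤ n * N :=
  stmt11_general r n N c hno
end

section
/- Fix integers r ≥ 2, n ≥ 1, N ≥ rn+1 and an r-coloring of the edges of the complete bipartite graph K_{N,N} with parts X and Y that contains no monochromatic copy of S_{n,n}. For i ∈ {1,...,r} let z_i be the number of vertices of X ∪ Y that receive exactly i colors, and let e* be the number of important edges. Then ∑_{i=1}^{r} z_i · (N - (r-i)n) ≤ e*. -/
/-!
An edge whose color is received by both of its endpoints is the central edge of a monochromatic
`S_{n,n}`, so every important edge is important at exactly one endpoint and `e*` is the sum over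
all vertices `v` of the number of edges at `v` whose color `v` receives. A vertex receiving `i`
colors has at most `n` edges of each of the other `r - i` colors, so at least `N - (r - i) n` of its
edges carry a received color; summing over the vertices gives the bound.
-/

open Finset

section Fibers

variable {β γ : Type*} [Fintype β] [Fintype γ] [DecidableEq γ]

/-- For `f` the coloring of the edges at a vertex, these are the colors the vertex receives. -/
def receivedColors (f : β → γ) (n : ℕ) : Finset γ :=
  {j | n < #{y | f y = j}}

lemma card_sub_mul_le_card_filter_mem_receivedColors (f : β → γ) (n : ℕ) :
    Fintype.card β - (Fintype.card γ - #(receivedColors f n)) * n ≤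
      #{y | f y ∈ receivedColors f n} := by
  set T := receivedColors f n
  have h_not_received : #{y | f y ∉ T} ≤ (Fintype.card γ - #T) * n := by
    calc #{y | f y ∉ T} = ∑ j ∈ Tᶜ, #{y | f y = j} := by
          simp_rw [← mem_compl]; exact (sum_card_fiberwise_eq_card_filter _ _ _).symm
      _ ≤ #Tᶜ * n := sum_le_card_nsmul _ _ _ fun j hj => by
          simpa [T, receivedColors] using hj
      _ = (Fintype.card γ - #T) * n := by rw [card_compl]
  have h_split := card_filter_add_card_filter_not (s := (univ : Finset β)) (fun y => f y ∈ T)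
  rw [card_univ] at h_split
  omega

end Fibers

lemma Finset.exists_fin_embedding_forall_mem {α : Type*} {k : ℕ} (s : Finset α) (h : k ≤ #s) :
    ∃ a : Fin k ↪ α, ∀ i, a i ∈ s := by
  obtain ⟨e⟩ := Function.Embedding.nonempty_of_card_le (α := Fin k) (β := s) (by simpa)
  exact ⟨e.trans (Function.Embedding.subtype _), fun i => (e i).2⟩

lemma bipHasMonoDoubleStar_of_lt_card {N r k l : ℕ} {c : Fin N → Fin N → Fin r} {u v : Fin N}
    (hu : k < #{y | c u y = c u v}) (hv : l < #{x | c x v = c u v}) :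
    BipHasMonoDoubleStar N r k l c := by
  obtain ⟨a, ha⟩ := ({y | c u y = c u v} : Finset (Fin N)).erase v
    |>.exists_fin_embedding_forall_mem (k := k) (by rw [card_erase_of_mem (by simp)]; omega)
  obtain ⟨b, hb⟩ := ({x | c x v = c u v} : Finset (Fin N)).erase u
    |>.exists_fin_embedding_forall_mem (k := l) (by rw [card_erase_of_mem (by simp)]; omega)
  simp only [mem_erase, mem_filter_univ] at ha hb
  exact ⟨u, v, a, b, c u v, a.injective, b.injective, fun i => (ha i).1, fun j => (hb j).1, rfl,
    fun i => (ha i).2, fun j => (hb j).2⟩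

lemma sum_card_fiber_mul_le_sum {α ι : Type*} [Fintype α] [DecidableEq ι] (t : Finset ι)
    (g : α → ι) (F : ι → ℕ) (h : α → ℕ) (hle : ∀ x, F (g x) ≤ h x) :
    ∑ i ∈ t, #{x | g x = i} * F i ≤ ∑ x, h x :=
  calc ∑ i ∈ t, #{x | g x = i} * F i = ∑ i ∈ t, ∑ x with g x = i, F (g x) :=
        sum_congr rfl fun i _ => by rw [sum_const_nat fun x hx => by rw [(mem_filter.1 hx).2]]
    _ ≤ ∑ x, F (g x) := sum_fiberwise_le_sum_of_sum_fiber_nonneg fun _ _ => Nat.zero_le _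
    _ ≤ ∑ x, h x := sum_le_sum fun x _ => hle x

lemma sum_card_mul_le_sum_card_filter_mem_receivedColors {α β γ : Type*} [Fintype α] [Fintype β]
    [Fintype γ] [DecidableEq γ] (f : α → β → γ) (n : ℕ) (t : Finset ℕ) :
    ∑ i ∈ t, #{x | #(receivedColors (f x) n) = i} * (Fintype.card β - (Fintype.card γ - i) * n) ≤
      ∑ x, #{y | f x y ∈ receivedColors (f x) n} :=
  sum_card_fiber_mul_le_sum t _ _ _ fun x => card_sub_mul_le_card_filter_mem_receivedColors (f x) n

lemma zcount_eq (n N r : ℕ) (c : Fin N → Fin N → Fin r) (i : ℕ) :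
    zcount n N r c i = #{x | #(receivedColors (c x) n) = i} +
      #{y | #(receivedColors (fun x => c x y) n) = i} :=
  rfl

lemma estar_eq_sum_add_sum {n N r : ℕ} {c : Fin N → Fin N → Fin r}
    (hno : ¬ BipHasMonoDoubleStar N r n n c) :
    estar n N r c = ∑ x, #{y | c x y ∈ receivedColors (c x) n} +
      ∑ y, #{x | c x y ∈ receivedColors (fun x' => c x' y) n} := by
  have hdisj : Disjoint
      ({p : Fin N × Fin N | n + 1 ≤ dX N r c (c p.1 p.2) p.1} : Finset _)
      ({p : Fin N × Fin N | n + 1 ≤ dY N r c (c p.1 p.2) p.2} : Finset _) :=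
    disjoint_filter.2 fun _ _ hX hY => hno (bipHasMonoDoubleStar_of_lt_card hX hY)
  rw [estar, filter_or, card_union_of_disjoint hdisj, card_filter, card_filter,
    Fintype.sum_prod_type, Fintype.sum_prod_type_right]
  simp only [card_filter, receivedColors, mem_filter_univ, dX, dY, Nat.lt_iff_add_one_le]

theorem stmt13_general (r n N : ℕ)
    (c : Fin N → Fin N → Fin r) (hno : ¬ BipHasMonoDoubleStar N r n n c) :
    ∑ i ∈ Finset.Icc 1 r, zcount n N r c i * (N - (r - i) * n) ≤ estar n N r c := by
  have hX := sum_card_mul_le_sum_card_filter_mem_receivedColors c n (Icc 1 r)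
  have hY := sum_card_mul_le_sum_card_filter_mem_receivedColors (fun y x => c x y) n (Icc 1 r)
  simp only [Fintype.card_fin] at hX hY
  simpa only [estar_eq_sum_add_sum hno, zcount_eq, add_mul, sum_add_distrib] using add_le_add hX hY

/-- Lower bound on the number of important edges:
`∑_{i=1}^{r} z_i (N - (r-i)n) ≤ e*`. -/
theorem stmt13 (r n N : ℕ) (hr : 2 ≤ r) (hn : 1 ≤ n) (hN : r * n + 1 ≤ N)
    (c : Fin N → Fin N → Fin r) (hno : ¬ BipHasMonoDoubleStar N r n n c) :
    ∑ i ∈ Finset.Icc 1 r, zcount n N r c i * (N - (r - i) * n) ≤ estar n N r c :=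
  stmt13_general r n N c hno
end

section
/- Fix integers r ≥ 2, n ≥ 1, N ≥ rn+1 and an r-coloring of the edges of the complete bipartite graph K_{N,N} with parts X and Y that contains no monochromatic copy of S_{n,n}. For i ∈ {1,...,r} let x_i (resp. y_i) be the number of vertices of X (resp. Y) whose unique received color is i, and let e* be the number of important edges. Then ∑_{i=1}^{r} x_i · y_i ≤ N² - e*. -/
/-!
If `x ∈ X` and `y ∈ Y` have the same unique received color `i` and the edge `xy` is important,
its color is received by `x` or `y`, hence equals `i`, so both endpoints receive the color of
`xy`: the `n` further edges of that color at `x` and at `y` form a monochromatic `S_{n,n}`.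
Hence the disjoint rectangles `X_i × Y_i` consist of non-important edges.
-/

open Finset

variable {N r : ℕ} (n : ℕ) (c : Fin N → Fin N → Fin r)

theorem bipHasMonoDoubleStar_of_receives {u v : Fin N}
    (hu : n + 1 ≤ dX N r c (c u v) u) (hv : n + 1 ≤ dY N r c (c u v) v) :
    BipHasMonoDoubleStar N r n n c := by
  set A := ({y | c u y = c u v} : Finset (Fin N)).erase v
  set B := ({x | c x v = c u v} : Finset (Fin N)).erase u
  have hA : n ≤ #A := by
    rw [card_erase_of_mem (by simp)]
    exact Nat.le_sub_of_add_le hu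
  have hB : n ≤ #B := by
    rw [card_erase_of_mem (by simp)]
    exact Nat.le_sub_of_add_le hv
  have ha := A.orderEmbOfCardLe_mem hA
  have hb := B.orderEmbOfCardLe_mem hB
  refine ⟨u, v, A.orderEmbOfCardLe hA, B.orderEmbOfCardLe hB, c u v,
    (A.orderEmbOfCardLe hA).injective, (B.orderEmbOfCardLe hB).injective,
    fun k => (mem_erase.mp (ha k)).1, fun k => (mem_erase.mp (hb k)).1, rfl,
    fun k => ?_, fun k => ?_⟩
  · simpa using (mem_erase.mp (ha k)).2
  · simpa using (mem_erase.mp (hb k)).2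

def uniqueColorX (i : Fin r) : Finset (Fin N) :=
  {x | n + 1 ≤ dX N r c i x ∧ ∀ j, n + 1 ≤ dX N r c j x → j = i}

def uniqueColorY (i : Fin r) : Finset (Fin N) :=
  {y | n + 1 ≤ dY N r c i y ∧ ∀ j, n + 1 ≤ dY N r c j y → j = i}

def importantEdges : Finset (Fin N × Fin N) :=
  {p | n + 1 ≤ dX N r c (c p.1 p.2) p.1 ∨ n + 1 ≤ dY N r c (c p.1 p.2) p.2}

theorem uniqueColorX_product_uniqueColorY_subset_compl (hno : ¬ BipHasMonoDoubleStar N r n n c)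
    (i : Fin r) : uniqueColorX n c i ×ˢ uniqueColorY n c i ⊆ (importantEdges n c)ᶜ := by
  rintro ⟨x, y⟩ hxy
  simp only [uniqueColorX, uniqueColorY, mem_product, mem_filter, mem_univ, true_and] at hxy
  obtain ⟨⟨hxi, hx⟩, ⟨hyi, hy⟩⟩ := hxy
  simp only [importantEdges, mem_compl, mem_filter, mem_univ, true_and]
  rintro (h | h)
  · exact hno (bipHasMonoDoubleStar_of_receives n c h (hx _ h ▸ hyi))
  · exact hno (bipHasMonoDoubleStar_of_receives n c (hy _ h ▸ hxi) h)

theorem pairwiseDisjoint_uniqueColorX_product_uniqueColorY :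
    ((univ : Finset (Fin r)) : Set (Fin r)).PairwiseDisjoint
      fun i => uniqueColorX n c i ×ˢ uniqueColorY n c i := by
  intro i _ j _ hij
  refine disjoint_product.mpr (Or.inl (disjoint_left.mpr fun x hxi hxj => hij ?_))
  simp only [uniqueColorX, mem_filter, mem_univ, true_and] at hxi hxj
  exact hxj.2 i hxi.1

theorem sum_xcount_mul_ycount_add_estar_le (hno : ¬ BipHasMonoDoubleStar N r n n c) :
    ∑ i, xcount n N r c i * ycount n N r c i + estar n N r c ≤ N ^ 2 := by
  have hsum : ∑ i, xcount n N r c i * ycount n N r c i ≤ #(importantEdges n c)ᶜ :=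
    calc ∑ i, xcount n N r c i * ycount n N r c i
        = #(univ.biUnion fun i => uniqueColorX n c i ×ˢ uniqueColorY n c i) := by
          rw [card_biUnion (pairwiseDisjoint_uniqueColorX_product_uniqueColorY n c)]
          simp only [card_product]
          rfl
      _ ≤ #(importantEdges n c)ᶜ :=
          card_le_card (biUnion_subset.mpr fun i _ =>
            uniqueColorX_product_uniqueColorY_subset_compl n c hno i)
  have hcompl : #(importantEdges n c)ᶜ + estar n N r c = N ^ 2 := by
    rw [card_compl, Fintype.card_prod, Fintype.card_fin, sq]
    exact Nat.sub_add_cancel (card_le_univ _ |>.trans_eq (by simp))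
  omega

theorem stmt15_general (r n N : ℕ)
    (c : Fin N → Fin N → Fin r) (hno : ¬ BipHasMonoDoubleStar N r n n c) :
    ∑ i : Fin r, (xcount n N r c i : ℤ) * (ycount n N r c i : ℤ) ≤
      (N : ℤ)^2 - estar n N r c := by
  have := sum_xcount_mul_ycount_add_estar_le n c hno
  zify at this
  linarith

/-- The non-important edges include all bicolored pairs: `∑_i x_i y_i ≤ N² - e*`. -/
theorem stmt15 (r n N : ℕ) (hr : 2 ≤ r) (hn : 1 ≤ n) (hN : r * n + 1 ≤ N)
    (c : Fin N → Fin N → Fin r) (hno : ¬ BipHasMonoDoubleStar N r n n c) :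
    ∑ i : Fin r, (xcount n N r c i : ℤ) * (ycount n N r c i : ℤ) ≤
      (N : ℤ)^2 - estar n N r c :=
  stmt15_general r n N c hno
end

section
/- For all integers r ≥ 1 and n ≥ m ≥ 1, there exists an r-coloring of the edges of the complete bipartite graph K_{rn,rn} in which every vertex is incident to at most n edges of each color; consequently this coloring contains no monochromatic copy of the double star S_{n,m}. (Equivalently, R^bip_r(S_{n,m}) ≥ rn + 1.) -/
/-!
Split each side of `K_{rn,rn}` into `r` blocks of `n` vertices and colour the edges between
block `s` and block `t` by `s + t` in `Fin r`. Since `t ↦ s + t` is a bijection of `Fin r`,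
every vertex sees each colour on exactly one block of the other side, i.e. on `n` edges.
The centre `u` of a monochromatic `S_{n,m}` would need `n + 1` edges of one colour.
-/

open Finset

theorem not_bipHasMonoDoubleStar_of_card_filter_le {N r k l : ℕ}
    {c : Fin N → Fin N → Fin r} (hc : ∀ x i, #{y | c x y = i} ≤ k) :
    ¬ BipHasMonoDoubleStar N r k l c := by
  rintro ⟨u, v, a, -, col, ha, -, hav, -, huv, hua, -⟩
  have hinj : Function.Injective (Fin.cons v a : Fin (k + 1) → Fin N) :=
    Fin.cons_injective_iff.2 ⟨fun ⟨i, hi⟩ => hav i hi, ha⟩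
  have hmem : ∀ j, (Fin.cons v a : Fin (k + 1) → Fin N) j ∈ ({y | c u y = col} : Finset _) :=
    Fin.cases (by simpa using huv) (by simpa using hua)
  have hcard := card_le_card_of_injOn (s := univ) _ (fun j _ => hmem j) hinj.injOn
  simp only [card_univ, Fintype.card_fin] at hcard
  have := hc u col
  omega

theorem Fin.add_right_inj' {r : ℕ} {a b b' : Fin r} : a + b = a + b' ↔ b = b' := by
  have : NeZero r := ⟨fun h => (h ▸ a).elim0⟩
  exact add_right_inj a

/-- The block of a vertex `x = n * s + t` (with `t < n`) of `K_{rn,rn}` is `s`. -/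
def block {r n : ℕ} (x : Fin (r * n)) : Fin r := (finProdFinEquiv.symm x).1

theorem card_filter_add_block_eq_le {r n : ℕ} (s i : Fin r) :
    #{y : Fin (r * n) | s + block y = i} ≤ n := by
  have hinj : Set.InjOn (fun y : Fin (r * n) => (finProdFinEquiv.symm y).2)
      (({y | s + block y = i} : Finset (Fin (r * n))) : Set (Fin (r * n))) := by
    intro y hy y' hy' h
    simp only [coe_filter, mem_univ, true_and, Set.mem_ofPred_eq] at hy hy'
    have hblock : block y = block y' := Fin.add_right_inj'.1 (hy.trans hy'.symm)
    exact finProdFinEquiv.symm.injective (Prod.ext hblock h)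
  simpa using card_le_card_of_injOn _ (fun y _ => mem_univ _) hinj

theorem stmt17_general (r n m : ℕ) :
    ∃ c : Fin (r*n) → Fin (r*n) → Fin r,
      (∀ (x : Fin (r*n)) (i : Fin r),
        (Finset.univ.filter (fun y => c x y = i)).card ≤ n) ∧
      (∀ (y : Fin (r*n)) (i : Fin r),
        (Finset.univ.filter (fun x => c x y = i)).card ≤ n) ∧
      ¬ BipHasMonoDoubleStar (r*n) r n m c := by
  have hrow (x : Fin (r * n)) (i : Fin r) : #{y | block x + block y = i} ≤ n :=
    card_filter_add_block_eq_le (block x) i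
  refine ⟨fun x y => block x + block y, hrow, fun y i => ?_,
    not_bipHasMonoDoubleStar_of_card_filter_le hrow⟩
  simpa only [add_comm] using card_filter_add_block_eq_le (block y) i

/-- `R^bip_r(S_{n,m}) ≥ rn + 1` for `n ≥ m ≥ 1`: there is an `r`-coloring of
`K_{rn,rn}` in which every vertex is incident to at most `n` edges of every color,
and consequently there is no monochromatic copy of `S_{n,m}`. -/
theorem stmt17 (r n m : ℕ) (hr : 1 ≤ r) (hm : 1 ≤ m) (hnm : m ≤ n) :
    ∃ c : Fin (r*n) → Fin (r*n) → Fin r,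
      (∀ (x : Fin (r*n)) (i : Fin r),
        (Finset.univ.filter (fun y => c x y = i)).card ≤ n) ∧
      (∀ (y : Fin (r*n)) (i : Fin r),
        (Finset.univ.filter (fun x => c x y = i)).card ≤ n) ∧
      ¬ BipHasMonoDoubleStar (r*n) r n m c :=
  stmt17_general r n m
end
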